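/- arXiv:2112.03230 — 3 statements merged into one kernel-verified Lean document; each statement's English description precedes it below -/
import Mathlib

section
/- Inductive-step identity of Lemma S1 (Eq. S57). For every t ∈ {1,…,T−1} and all x_0,…,x_{t+1} ∈ ℝ, f_M ∈ ℝ^M, one has the pointwise density identity p(x_{t+1}|x_t,f_M) · q(f_M|x_t,…,x_0) = q(f_M|x_{t+1},…,x_0) · q(x_{t+1}|x_t,…,x_0), where p(x_{t+1}|x_t,f_M) = N(x_{t+1} | x_t + K_{x_t M}K_MM^{−1} f_M, Q + K_{x_t x_t} − K_{x_t M}K_MM^{−1}K_{x_t M}ᵀ), q(f_M|x_s,…,x_0) = N_M(f_M | m_M + S_M K_MM^{−1}(K_{0:s−1,M})ᵀ(S̃_{0:s−1,0:s−1})^{−1}(x_{1:s} − μ̃_{0:s−1}), S_M − S_M K_MM^{−1}(K_{0:s−1,M})ᵀ(S̃_{0:s−1,0:s−1})^{−1}K_{0:s−1,M}K_MM^{−1}S_M) for s ∈ {t, t+1}, and q(x_{t+1}|x_t,…,x_0) = N(x_{t+1} | μ̃_t + S̃_{t,0:t−1}(S̃_{0:t−1,0:t−1})^{−1}(x_{1:t}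 − μ̃_{0:t−1}), S̃_{t,t} − S̃_{t,0:t−1}(S̃_{0:t−1,0:t−1})^{−1}S̃_{0:t−1,t}). -/
open MeasureTheory Matrix

/-- Scalar Gaussian density `N(x | μ, σ²)`. -/
noncomputable def gauss (x μ σ2 : ℝ) : ℝ :=
  (Real.sqrt (2 * Real.pi * σ2))⁻¹ * Real.exp (-(x - μ) ^ 2 / (2 * σ2))

/-- Multivariate Gaussian density `N_M(v | m, S)` on `ℝ^M`. -/
noncomputable def gaussM {M : ℕ} (v m : Fin M → ℝ) (S : Matrix (Fin M) (Fin M) ℝ) : ℝ :=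
  (Real.sqrt ((2 * Real.pi) ^ M * S.det))⁻¹ *
    Real.exp (-(1 / 2) * ((v - m) ⬝ᵥ (S⁻¹ *ᵥ (v - m))))

/-- The state path `x_0, …, x_{t-1}, x_t, x_t, …` built from `xs : Fin t → ℝ`
(the variables of integration `x_0, …, x_{t-1}`) and the final value `xt = x_t`. -/
def path (t : ℕ) (xs : Fin t → ℝ) (xt : ℝ) : ℕ → ℝ :=
  fun i => if h : i < t then xs ⟨i, h⟩ else xt

/-- GPSSM data: kernel `k`, inducing inputs `z`, process noise `Q`,
variational parameters `mM, SM` (inducing outputs) and `m0, S0` (initial state). -/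
structure GPSSM (M : ℕ) where
  k : ℝ → ℝ → ℝ
  z : Fin M → ℝ
  Q : ℝ
  mM : Fin M → ℝ
  SM : Matrix (Fin M) (Fin M) ℝ
  m0 : ℝ
  S0 : ℝ

namespace GPSSM

variable {M : ℕ} (g : GPSSM M)

/-- `K_MM`, the kernel matrix of the inducing inputs. -/
noncomputable def KMM : Matrix (Fin M) (Fin M) ℝ :=
  Matrix.of fun a b => g.k (g.z a) (g.z b)

/-- `K_{xM}`, the vector of kernel evaluations between a state `x` and the inducing inputs. -/
noncomputable def KxM (x : ℝ) : Fin M → ℝ := fun a => g.k x (g.z a)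

/-- Transition variance `Q + K_xx - K_{xM} K_MM⁻¹ K_{xM}ᵀ`. -/
noncomputable def transVar (x : ℝ) : ℝ :=
  g.Q + g.k x x - g.KxM x ⬝ᵥ (g.KMM⁻¹ *ᵥ g.KxM x)

/-- Transition density `p(x' | x, f_M)`. -/
noncomputable def trans (x' x : ℝ) (f : Fin M → ℝ) : ℝ :=
  gauss x' (x + g.KxM x ⬝ᵥ (g.KMM⁻¹ *ᵥ f)) (g.transVar x)

/-- `μ̃(x) = x + K_{xM} K_MM⁻¹ m_M`. -/
noncomputable def muT (x : ℝ) : ℝ := x + g.KxM x ⬝ᵥ (g.KMM⁻¹ *ᵥ g.mM)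

/-- `S̃_{a,b}` as a function of the state path. -/
noncomputable def Stl (x : ℕ → ℝ) (a b : ℕ) : ℝ :=
  g.KxM (x a) ⬝ᵥ (g.KMM⁻¹ *ᵥ (g.SM *ᵥ (g.KMM⁻¹ *ᵥ g.KxM (x b)))) +
    if a = b then g.transVar (x a) else 0

/-- The block matrix `S̃_{0:s-1,0:s-1}` of size `s`. -/
noncomputable def blockS (x : ℕ → ℝ) (s : ℕ) : Matrix (Fin s) (Fin s) ℝ :=
  Matrix.of fun a b => g.Stl x a b

/-- Conditional mean `μ̂_{s+1} = μ̃_s + S̃_{s,0:s-1} (S̃_{0:s-1,0:s-1})⁻¹ (x_{1:s} − μ̃_{0:s-1})`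
(for `s = 0` the correction term is empty and this is `μ̃_0`). -/
noncomputable def condMean (x : ℕ → ℝ) (s : ℕ) : ℝ :=
  g.muT (x s) +
    (fun i : Fin s => g.Stl x s i) ⬝ᵥ
      ((g.blockS x s)⁻¹ *ᵥ fun i : Fin s => x ((i : ℕ) + 1) - g.muT (x i))

/-- Conditional variance
`Σ̂_{s+1} = S̃_{s,s} − S̃_{s,0:s-1} (S̃_{0:s-1,0:s-1})⁻¹ S̃_{0:s-1,s}`. -/
noncomputable def condVar (x : ℕ → ℝ) (s : ℕ) : ℝ :=
  g.Stl x s s -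
    (fun i : Fin s => g.Stl x s i) ⬝ᵥ ((g.blockS x s)⁻¹ *ᵥ fun i : Fin s => g.Stl x i s)

/-- The matrix `K_{0:t-1,M} ∈ ℝ^{t×M}` whose `a`-th row is `K_{x_a M}`. -/
noncomputable def Pmat (x : ℕ → ℝ) (t : ℕ) : Matrix (Fin t) (Fin M) ℝ :=
  Matrix.of fun a j => g.k (x a) (g.z j)

/-- The residual vector `x_{1:t} − μ̃_{0:t-1}`. -/
noncomputable def resid (x : ℕ → ℝ) (t : ℕ) : Fin t → ℝ :=
  fun i => x ((i : ℕ) + 1) - g.muT (x i)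

/-- Conditional mean of the inducing outputs given `x_0, …, x_t`:
`μ̂^t_M = m_M + S_M K_MM⁻¹ (K_{0:t-1,M})ᵀ (S̃_{0:t-1,0:t-1})⁻¹ (x_{1:t} − μ̃_{0:t-1})`. -/
noncomputable def muHatM (x : ℕ → ℝ) (t : ℕ) : Fin M → ℝ :=
  g.mM + (g.SM * g.KMM⁻¹ * (g.Pmat x t)ᵀ) *ᵥ ((g.blockS x t)⁻¹ *ᵥ g.resid x t)

/-- Conditional covariance of the inducing outputs given `x_0, …, x_t`:
`Σ̂^t_M = S_M − S_M K_MM⁻¹ (K_{0:t-1,M})ᵀ (S̃_{0:t-1,0:t-1})⁻¹ K_{0:t-1,M} K_MM⁻¹ S_M`. -/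
noncomputable def SigHatM (x : ℕ → ℝ) (t : ℕ) : Matrix (Fin M) (Fin M) ℝ :=
  g.SM - g.SM * g.KMM⁻¹ * (g.Pmat x t)ᵀ * (g.blockS x t)⁻¹ * g.Pmat x t * g.KMM⁻¹ * g.SM

end GPSSM

section helpers
variable {m n M : ℕ}

lemma mul_vecMulVec' (A : Matrix (Fin m) (Fin n) ℝ) (u : Fin n → ℝ) (v : Fin M → ℝ) :
    A * vecMulVec u v = vecMulVec (A *ᵥ u) v := by
  ext i j
  simp [Matrix.mul_apply, vecMulVec_apply, Matrix.mulVec, dotProduct, Finset.sum_mul, mul_assoc]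

lemma vecMulVec_mul' (u : Fin m → ℝ) (v : Fin n → ℝ) (A : Matrix (Fin n) (Fin M) ℝ) :
    vecMulVec u v * A = vecMulVec u (v ᵥ* A) := by
  ext i j
  simp only [Matrix.mul_apply, vecMulVec_apply, Matrix.vecMul, dotProduct, Finset.mul_sum]
  exact Finset.sum_congr rfl fun k _ => by ring

lemma vecMulVec_mulVec' (u : Fin m → ℝ) (v h : Fin n → ℝ) :
    vecMulVec u v *ᵥ h = (v ⬝ᵥ h) • u := by
  ext i
  simp only [Matrix.mulVec, dotProduct, vecMulVec_apply, Pi.smul_apply, smul_eq_mul,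
    Finset.sum_mul]
  exact Finset.sum_congr rfl fun k _ => by ring

lemma vecMul_vecMulVec' (p : Fin m → ℝ) (u : Fin m → ℝ) (v : Fin n → ℝ) :
    p ᵥ* vecMulVec u v = (p ⬝ᵥ u) • v := by
  ext j
  simp only [Matrix.vecMul, dotProduct, vecMulVec_apply, Pi.smul_apply, smul_eq_mul,
    Finset.sum_mul]
  exact Finset.sum_congr rfl fun k _ => by ring

lemma smul_vecMulVec' (s : ℝ) (u : Fin m → ℝ) (v : Fin n → ℝ) :
    vecMulVec (s • u) v = s • vecMulVec u v := by
  ext i j; simp [vecMulVec_apply, mul_assoc]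

lemma vecMulVec_smul' (s : ℝ) (u : Fin m → ℝ) (v : Fin n → ℝ) :
    vecMulVec u (s • v) = s • vecMulVec u v := by
  ext i j; simp [vecMulVec_apply]; ring

lemma sub_vecMulVec' (p r : Fin m → ℝ) (v : Fin n → ℝ) :
    vecMulVec (p - r) v = vecMulVec p v - vecMulVec r v := by
  ext i j; simp [vecMulVec_apply]; ring

end helpers

lemma gaussian_update {M : ℕ} (S : Matrix (Fin M) (Fin M) ℝ) (hS : S.PosDef)
    (w μ f : Fin M → ℝ) (q y c : ℝ) (hq : 0 < q) :
    gauss y (c + w ⬝ᵥ f) q * gaussM f μ S =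
      gaussM f (μ + ((y - c - w ⬝ᵥ μ) / (q + w ⬝ᵥ (S *ᵥ w))) • (S *ᵥ w))
          (S - (q + w ⬝ᵥ (S *ᵥ w))⁻¹ • Matrix.vecMulVec (S *ᵥ w) (S *ᵥ w)) *
        gauss y (c + w ⬝ᵥ μ) (q + w ⬝ᵥ (S *ᵥ w)) := by
  have hq' : q ≠ 0 := ne_of_gt hq
  set u : Fin M → ℝ := S *ᵥ w with hu
  set v : ℝ := q + w ⬝ᵥ u with hvdef
  set δ : ℝ := y - c - w ⬝ᵥ μ with hδ
  set S' : Matrix (Fin M) (Fin M) ℝ := S - v⁻¹ • vecMulVec u u with hS'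
  clear_value S'
  have hsymm : Sᵀ = S := hS.isHermitian.eq
  have hdet : 0 < S.det := hS.det_pos
  have hdu : IsUnit S.det := isUnit_iff_ne_zero.2 (ne_of_gt hdet)
  have hSr : S * S⁻¹ = 1 := Matrix.mul_nonsing_inv S hdu
  have hSl : S⁻¹ * S = 1 := Matrix.nonsing_inv_mul S hdu
  have hwu0 : 0 ≤ w ⬝ᵥ u := by
    have := hS.posSemidef.re_dotProduct_nonneg w
    simpa [hu] using this
  have hv : 0 < v := by rw [hvdef]; linarith
  have hv' : v ≠ 0 := ne_of_gt hv
  have hSinvu : S⁻¹ *ᵥ u = w := by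
    rw [hu, Matrix.mulVec_mulVec, hSl, Matrix.one_mulVec]
  have hSinvT : S⁻¹ᵀ = S⁻¹ := by rw [Matrix.transpose_nonsing_inv, hsymm]
  have huS : u ᵥ* S⁻¹ = w := by rw [← Matrix.mulVec_transpose, hSinvT, hSinvu]
  -- inverse of S'
  have hSinv' : S'⁻¹ = S⁻¹ + q⁻¹ • vecMulVec w w := by
    apply Matrix.inv_eq_right_inv
    have expand : S' * (S⁻¹ + q⁻¹ • vecMulVec w w)
        = 1 + (q⁻¹ - v⁻¹ - v⁻¹ * (q⁻¹ * (u ⬝ᵥ w))) • vecMulVec u w := by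
      rw [hS', Matrix.sub_mul, Matrix.mul_add, Matrix.mul_add, hSr, Matrix.mul_smul,
        mul_vecMulVec', ← hu, Matrix.smul_mul, Matrix.smul_mul, vecMulVec_mul', huS,
        Matrix.mul_smul, vecMulVec_mul', vecMul_vecMulVec', vecMulVec_smul', smul_smul,
        smul_smul]
      ext i j
      simp only [Matrix.add_apply, Matrix.sub_apply, Pi.smul_apply, smul_eq_mul,
        vecMulVec_apply, Matrix.smul_apply]
      ring
    rw [expand]
    have hc : q⁻¹ - v⁻¹ - v⁻¹ * (q⁻¹ * (u ⬝ᵥ w)) = 0 := by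
      have : u ⬝ᵥ w = v - q := by rw [dotProduct_comm, hvdef]; ring
      rw [this]; field_simp; ring
    rw [hc, zero_smul, add_zero]
  -- determinant of S'
  have hdet' : S'.det = S.det * (q / v) := by
    have hfac : S' = S * (1 + vecMulVec ((-v⁻¹) • w) u) := by
      rw [Matrix.mul_add, Matrix.mul_one, smul_vecMulVec', Matrix.mul_smul, mul_vecMulVec',
        ← hu, hS']
      ext i j
      simp only [Matrix.sub_apply, Matrix.add_apply, Matrix.smul_apply, smul_eq_mul]
      ring
    rw [hfac, Matrix.det_mul]
    rw [vecMulVec_eq (Fin 1), Matrix.det_one_add_replicateCol_mul_replicateRow]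
    have : u ⬝ᵥ (-v⁻¹) • w = -v⁻¹ * (w ⬝ᵥ u) := by
      rw [dotProduct_smul, dotProduct_comm]; simp [mul_comm]
    rw [this]
    have : w ⬝ᵥ u = v - q := by rw [hvdef]; ring
    rw [this]; field_simp; ring
  have hdet'pos : 0 < S'.det := by rw [hdet']; positivity
  -- now the densities
  unfold gauss gaussM
  rw [hSinv']
  set g : Fin M → ℝ := f - μ with hg
  clear_value g
  have hfμ' : f - (μ + (δ / v) • u) = g - (δ / v) • u := by rw [hg]; abel
  rw [hfμ']
  set s : ℝ := δ / v with hsdef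
  clear_value s
  -- scalar abbreviations
  have hApply : ∀ h : Fin M → ℝ, (S⁻¹ + q⁻¹ • vecMulVec w w) *ᵥ h
      = S⁻¹ *ᵥ h + (q⁻¹ * (w ⬝ᵥ h)) • w := by
    intro h
    rw [Matrix.add_mulVec, Matrix.smul_mulVec, vecMulVec_mulVec', smul_smul]
  have hgu : g ⬝ᵥ (S⁻¹ *ᵥ u) = w ⬝ᵥ g := by rw [hSinvu, dotProduct_comm]
  have hug : u ⬝ᵥ (S⁻¹ *ᵥ g) = w ⬝ᵥ g := by
    rw [dotProduct_mulVec, ← Matrix.mulVec_transpose, hSinvT, hSinvu]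
  have huu : u ⬝ᵥ (S⁻¹ *ᵥ u) = w ⬝ᵥ u := by rw [hSinvu, dotProduct_comm]
  -- expand the quadratic forms
  set A : ℝ := w ⬝ᵥ g with hA
  set B : ℝ := g ⬝ᵥ (S⁻¹ *ᵥ g) with hB
  set E : ℝ := w ⬝ᵥ u with hE
  clear_value A B E
  clear_value u v δ
  have key2 : (g - s • u) ⬝ᵥ ((S⁻¹ + q⁻¹ • vecMulVec w w) *ᵥ (g - s • u))
      = B - 2 * s * A + s ^ 2 * E + q⁻¹ * (A - s * E) ^ 2 := by
    rw [hApply]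
    have hwh : w ⬝ᵥ (g - s • u) = A - s * E := by
      rw [dotProduct_sub, dotProduct_smul, smul_eq_mul, hA, hE]
    rw [hwh]
    rw [Matrix.mulVec_sub, Matrix.mulVec_smul]
    simp only [dotProduct_sub, sub_dotProduct, smul_dotProduct, dotProduct_smul,
      dotProduct_add, add_dotProduct, smul_eq_mul]
    rw [hgu, hug, huu]
    have hgw : g ⬝ᵥ w = A := by rw [dotProduct_comm]; exact hA.symm
    have huw : u ⬝ᵥ w = E := by rw [dotProduct_comm]; exact hE.symm
    rw [hgw, huw, ← hB]
    ring
  have hwf : y - (c + w ⬝ᵥ f) = δ - A := by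
    have : w ⬝ᵥ f = w ⬝ᵥ μ + A := by rw [hA, hg, dotProduct_sub]; ring
    rw [this, hδ]; ring
  have hwμ : y - (c + w ⬝ᵥ μ) = δ := by rw [hδ]; ring
  rw [key2, hwf, hwμ]
  -- normalizers
  have hnorm : Real.sqrt (2 * Real.pi * q) * Real.sqrt ((2 * Real.pi) ^ M * S.det)
      = Real.sqrt ((2 * Real.pi) ^ M * S'.det) * Real.sqrt (2 * Real.pi * v) := by
    rw [← Real.sqrt_mul (by positivity), ← Real.sqrt_mul (by positivity)]
    congr 1
    rw [hdet']
    field_simp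
  have hexp : -(δ - A) ^ 2 / (2 * q) + -(1/2) * B
      = -(1/2) * (B - 2 * s * A + s ^ 2 * E + q⁻¹ * (A - s * E) ^ 2) + -δ ^ 2 / (2 * v) := by
    have hEv : E = v - q := by rw [hvdef, hE]; ring
    rw [hsdef, hEv]
    field_simp
    ring
  calc (Real.sqrt (2 * Real.pi * q))⁻¹ * Real.exp (-(δ - A) ^ 2 / (2 * q)) *
        ((Real.sqrt ((2 * Real.pi) ^ M * S.det))⁻¹ * Real.exp (-(1/2) * B))
      = (Real.sqrt (2 * Real.pi * q) * Real.sqrt ((2 * Real.pi) ^ M * S.det))⁻¹ *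
          Real.exp (-(δ - A) ^ 2 / (2 * q) + -(1/2) * B) := by
        rw [mul_inv, Real.exp_add]; ring
    _ = (Real.sqrt ((2 * Real.pi) ^ M * S'.det) * Real.sqrt (2 * Real.pi * v))⁻¹ *
          Real.exp (-(1/2) * (B - 2 * s * A + s ^ 2 * E + q⁻¹ * (A - s * E) ^ 2)
            + -δ ^ 2 / (2 * v)) := by rw [hnorm, hexp]
    _ = _ := by rw [mul_inv, Real.exp_add]; ring

lemma dot_sandwich {n : ℕ} (G S : Matrix (Fin n) (Fin n) ℝ) (hG : Gᵀ = G) (hS : Sᵀ = S)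
    (p r : Fin n → ℝ) :
    p ⬝ᵥ (G *ᵥ (S *ᵥ (G *ᵥ r))) = r ⬝ᵥ (G *ᵥ (S *ᵥ (G *ᵥ p))) := by
  rw [Matrix.mulVec_mulVec, Matrix.mulVec_mulVec, Matrix.mulVec_mulVec, Matrix.mulVec_mulVec]
  rw [dotProduct_mulVec, ← Matrix.mulVec_transpose, Matrix.transpose_mul, Matrix.transpose_mul,
    hG, hS, dotProduct_comm, ← Matrix.mul_assoc]

lemma GPSSM.Stl_symm {M : ℕ} (g : GPSSM M) (hK : g.KMMᵀ = g.KMM) (hS : g.SMᵀ = g.SM)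
    (x : ℕ → ℝ) (a b : ℕ) : g.Stl x a b = g.Stl x b a := by
  have hKi : g.KMM⁻¹ᵀ = g.KMM⁻¹ := by rw [Matrix.transpose_nonsing_inv, hK]
  rcases eq_or_ne a b with h | h
  · rw [h]
  · unfold GPSSM.Stl
    rw [if_neg h, if_neg h.symm, dot_sandwich _ _ hKi hS]

/-- **Inductive-step identity of Lemma S1** (Eq. S57): for `t ∈ {1, …, T−1}`,
`p(x_{t+1}|x_t,f_M) · q(f_M|x_t,…,x_0) = q(f_M|x_{t+1},…,x_0) · q(x_{t+1}|x_t,…,x_0)`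
pointwise in all variables, where `q(f_M|x_s,…,x_0) = N_M(f_M | μ̂^s_M, Σ̂^s_M)` and
`q(x_{t+1}|x_t,…,x_0)` is the Gaussian-conditioning conditional. -/
theorem gpssm_lemmaS1_inductive_step
    {M T : ℕ} (g : GPSSM M)
    (hQ : 0 < g.Q) (hKMM : g.KMM.PosDef) (hSM : g.SM.PosDef)
    (t : ℕ) (ht1 : 1 ≤ t) (htT : t ≤ T - 1)
    (x : ℕ → ℝ) (f : Fin M → ℝ)
    -- the block matrices (S̃_{a,b})_{0≤a,b≤t−1} and (S̃_{a,b})_{0≤a,b≤t} are positive definite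
    (hblock₁ : (g.blockS x t).PosDef) (hblock₂ : (g.blockS x (t + 1)).PosDef)
    -- the transition variance is positive
    (htrans : 0 < g.transVar (x t))
    -- the conditional variance of x_{t+1} given x_t, …, x_0 is positive
    (hcv : 0 < g.condVar x t)
    -- both conditional covariances of f_M are positive definite
    (hpost₁ : (g.SigHatM x t).PosDef) (hpost₂ : (g.SigHatM x (t + 1)).PosDef) :
    g.trans (x (t + 1)) (x t) f * gaussM f (g.muHatM x t) (g.SigHatM x t)
      = gaussM f (g.muHatM x (t + 1)) (g.SigHatM x (t + 1)) *
          gauss (x (t + 1)) (g.condMean x t) (g.condVar x t) := by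
  -- symmetries and invertibility
  have hKsym : g.KMMᵀ = g.KMM := hKMM.isHermitian.eq
  have hKin : g.KMM⁻¹ᵀ = g.KMM⁻¹ := by rw [Matrix.transpose_nonsing_inv, hKsym]
  have hSMsym : g.SMᵀ = g.SM := hSM.isHermitian.eq
  have hPsym : (g.blockS x t)ᵀ = g.blockS x t := hblock₁.isHermitian.eq
  have hPiisym : ((g.blockS x t)⁻¹)ᵀ = (g.blockS x t)⁻¹ := by
    rw [Matrix.transpose_nonsing_inv, hPsym]
  have hPdet : IsUnit (g.blockS x t).det := isUnit_iff_ne_zero.2 (ne_of_gt hblock₁.det_pos)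
  have hPr : g.blockS x t * (g.blockS x t)⁻¹ = 1 := Matrix.mul_nonsing_inv _ hPdet
  have hNdet : IsUnit (g.blockS x (t+1)).det := isUnit_iff_ne_zero.2 (ne_of_gt hblock₂.det_pos)
  have hNl : (g.blockS x (t+1))⁻¹ * g.blockS x (t+1) = 1 := Matrix.nonsing_inv_mul _ hNdet
  -- abbreviations
  set a : Fin M → ℝ := g.KxM (x t) with ha
  set w : Fin M → ℝ := g.KMM⁻¹ *ᵥ a with hw
  set q : ℝ := g.transVar (x t) with hqdef
  set Pii : Matrix (Fin t) (Fin t) ℝ := (g.blockS x t)⁻¹ with hPiidef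
  set r : Fin t → ℝ := g.resid x t with hrdef
  set Bm : Matrix (Fin M) (Fin t) ℝ := g.SM * g.KMM⁻¹ * (g.Pmat x t)ᵀ with hBm
  set c : Fin t → ℝ := fun i => g.Stl x t ↑i with hcdef
  set Sg : Matrix (Fin M) (Fin M) ℝ := g.SigHatM x t with hSg
  set μ : Fin M → ℝ := g.muHatM x t with hμdef
  set y : ℝ := x (t + 1) with hy
  set u : Fin M → ℝ := Sg *ᵥ w with hu
  set v : ℝ := q + w ⬝ᵥ u with hvdef
  set δ : ℝ := y - x t - w ⬝ᵥ μ with hδdef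
  clear_value a w q Pii r Bm c Sg μ y u v δ
  -- basic dot product transfers
  have haK : ∀ z : Fin M → ℝ, a ⬝ᵥ (g.KMM⁻¹ *ᵥ z) = w ⬝ᵥ z := by
    intro z
    rw [dotProduct_mulVec, ← Matrix.mulVec_transpose, hKin, ← hw]
  -- structure of SigHatM
  have hBmT : Bmᵀ = g.Pmat x t * (g.KMM⁻¹ * g.SM) := by
    rw [hBm, Matrix.transpose_mul, Matrix.transpose_mul, Matrix.transpose_transpose,
      hKin, hSMsym]
  have hSdec : Sg = g.SM - Bm * (Pii * Bmᵀ) := by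
    rw [hSg, hBmT, hPiidef, hBm]
    unfold GPSSM.SigHatM
    simp only [Matrix.mul_assoc]
  -- F1 : w ᵥ* Bm = c
  have hcB : w ᵥ* Bm = c := by
    funext i
    have h1 : w ᵥ* Bm = g.Pmat x t *ᵥ (g.KMM⁻¹ *ᵥ (g.SM *ᵥ (g.KMM⁻¹ *ᵥ a))) := by
      rw [hBm, ← Matrix.vecMul_vecMul, ← Matrix.vecMul_vecMul, Matrix.vecMul_transpose]
      rw [hw, ← Matrix.mulVec_transpose g.SM, hSMsym, ← Matrix.mulVec_transpose g.KMM⁻¹, hKin]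
    rw [h1]
    simp only [hcdef]
    have h2 : g.Stl x t ↑i
        = a ⬝ᵥ (g.KMM⁻¹ *ᵥ (g.SM *ᵥ (g.KMM⁻¹ *ᵥ g.KxM (x ↑i)))) := by
      unfold GPSSM.Stl
      rw [if_neg (Nat.ne_of_lt' i.isLt), add_zero, ← ha]
    rw [h2, dot_sandwich _ _ hKin hSMsym]
    simp [GPSSM.Pmat, GPSSM.KxM, Matrix.mulVec, dotProduct, Matrix.of_apply]
  have hBw : Bmᵀ *ᵥ w = c := by rw [Matrix.mulVec_transpose, hcB]
  -- F3 : u = SM w - Bm Pii c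
  have hu3 : u = g.SM *ᵥ w - Bm *ᵥ (Pii *ᵥ c) := by
    rw [hu, hSdec, Matrix.sub_mulVec, ← Matrix.mulVec_mulVec, ← Matrix.mulVec_mulVec, hBw]
  -- F4 : d = wᵀ SM w + q
  have hd : g.Stl x t t = w ⬝ᵥ (g.SM *ᵥ w) + q := by
    unfold GPSSM.Stl
    rw [if_pos rfl, ← ha, ← hqdef, haK, ← hw]
  -- F5 : condVar = v
  have hwBm : ∀ z : Fin t → ℝ, w ⬝ᵥ (Bm *ᵥ z) = c ⬝ᵥ z := by
    intro z; rw [dotProduct_mulVec, hcB]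
  have hdv : g.Stl x t t - c ⬝ᵥ (Pii *ᵥ c) = v := by
    rw [hd, hvdef, hu3, dotProduct_sub, hwBm]
    ring
  have hlam1 : (fun i : Fin t => g.Stl x t ↑i) = c := hcdef.symm
  have hlam2 : (fun i : Fin t => g.Stl x ↑i t) = c := by
    funext i; rw [g.Stl_symm hKsym hSMsym x ↑i t]; simp [hcdef]
  have hlam3 : (fun i : Fin t => x (↑i + 1) - g.muT (x ↑i)) = r := by
    funext i; simp [hrdef, GPSSM.resid]
  have hcveq : g.condVar x t = v := by
    unfold GPSSM.condVar
    rw [← hPiidef, hlam1, hlam2]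
    exact hdv
  have hv0 : 0 < v := hcveq ▸ hcv
  have hv' : v ≠ 0 := ne_of_gt hv0
  -- F6 : condMean = x t + wᵀμ
  have hμeq : μ = g.mM + Bm *ᵥ (Pii *ᵥ r) := by
    rw [hμdef]
    unfold GPSSM.muHatM
    rw [← hBm, ← hPiidef, ← hrdef]
  have hwμ : w ⬝ᵥ μ = w ⬝ᵥ g.mM + c ⬝ᵥ (Pii *ᵥ r) := by
    rw [hμeq, dotProduct_add, hwBm]
  have hmuT : g.muT (x t) = x t + w ⬝ᵥ g.mM := by
    unfold GPSSM.muT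
    rw [← ha, haK]
  have hmean : g.condMean x t = x t + w ⬝ᵥ μ := by
    unfold GPSSM.condMean
    rw [← hPiidef, hlam1, hlam3, hmuT, hwμ]
    ring
  -- block entries of blockS x (t+1)
  have hst : g.Stl x t t = v + c ⬝ᵥ (Pii *ᵥ c) := by linarith [hdv]
  have hNcc : ∀ i j : Fin t,
      g.blockS x (t+1) i.castSucc j.castSucc = g.blockS x t i j := by
    intro i j; simp [GPSSM.blockS]
  have hNcl : ∀ i : Fin t, g.blockS x (t+1) i.castSucc (Fin.last t) = c i := by
    intro i
    show g.Stl x ↑i.castSucc ↑(Fin.last t) = c i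
    rw [Fin.coe_castSucc, Fin.val_last, g.Stl_symm hKsym hSMsym]
    simp [hcdef]
  have hNlc : ∀ j : Fin t, g.blockS x (t+1) (Fin.last t) j.castSucc = c j := by
    intro j
    show g.Stl x ↑(Fin.last t) ↑j.castSucc = c j
    rw [Fin.coe_castSucc, Fin.val_last]
    simp [hcdef]
  have hNll : g.blockS x (t+1) (Fin.last t) (Fin.last t) = g.Stl x t t := by
    show g.Stl x ↑(Fin.last t) ↑(Fin.last t) = _
    rw [Fin.val_last]
  -- residuals
  have hRc : ∀ i : Fin t, g.resid x (t+1) i.castSucc = r i := by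
    intro i; rw [hrdef]; simp [GPSSM.resid]
  have hRl : g.resid x (t+1) (Fin.last t) = δ + c ⬝ᵥ (Pii *ᵥ r) := by
    have : g.resid x (t+1) (Fin.last t) = x (t+1) - g.muT (x t) := by
      simp [GPSSM.resid, Fin.val_last]
    rw [this, ← hy, hmuT, hδdef, hwμ]
    ring
  have hPPir : g.blockS x t *ᵥ (Pii *ᵥ r) = r := by
    rw [Matrix.mulVec_mulVec, hPr, Matrix.one_mulVec]
  have hPPic : g.blockS x t *ᵥ (Pii *ᵥ c) = c := by
    rw [Matrix.mulVec_mulVec, hPr, Matrix.one_mulVec]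
  -- the solution of the (t+1)-block linear system
  set u₂ : ℝ := δ / v with hu₂
  set u₁ : Fin (t+1) → ℝ := Fin.snoc (Pii *ᵥ r - u₂ • (Pii *ᵥ c)) u₂ with hu₁def
  have huv : u₂ * v = δ := by rw [hu₂]; field_simp
  have hNu : g.blockS x (t+1) *ᵥ u₁ = g.resid x (t+1) := by
    funext i
    induction i using Fin.lastCases with
    | last =>
      have e : (g.blockS x (t+1) *ᵥ u₁) (Fin.last t)
          = c ⬝ᵥ (Pii *ᵥ r - u₂ • (Pii *ᵥ c)) + g.Stl x t t * u₂ := by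
        rw [Matrix.mulVec, dotProduct, Fin.sum_univ_castSucc]
        simp only [hu₁def, Fin.snoc_castSucc, Fin.snoc_last, hNlc, hNll]
        rfl
      rw [e, hRl, dotProduct_sub, dotProduct_smul, smul_eq_mul, hst]
      linear_combination huv
    | cast i =>
      have e : (g.blockS x (t+1) *ᵥ u₁) i.castSucc
          = (g.blockS x t *ᵥ (Pii *ᵥ r - u₂ • (Pii *ᵥ c))) i + c i * u₂ := by
        rw [Matrix.mulVec, dotProduct, Fin.sum_univ_castSucc]
        simp only [hu₁def, Fin.snoc_castSucc, Fin.snoc_last, hNcc, hNcl]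
        rfl
      rw [e, Matrix.mulVec_sub, Matrix.mulVec_smul, hPPir, hPPic, hRc]
      simp only [Pi.sub_apply, Pi.smul_apply, smul_eq_mul]
      ring
  have hu₁ : (g.blockS x (t+1))⁻¹ *ᵥ g.resid x (t+1) = u₁ := by
    rw [← hNu, Matrix.mulVec_mulVec, hNl, Matrix.one_mulVec]
  -- columns of the extended cross-covariance matrix
  have hCc : ∀ (j : Fin M) (i : Fin t),
      (g.SM * g.KMM⁻¹ * (g.Pmat x (t+1))ᵀ) j i.castSucc = Bm j i := by
    intro j i
    rw [hBm]
    simp only [Matrix.mul_apply, Matrix.transpose_apply]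
    refine Finset.sum_congr rfl fun k _ => ?_
    congr 1 <;> simp [GPSSM.Pmat]
  have haKw : a ᵥ* g.KMM⁻¹ = w := by rw [← Matrix.mulVec_transpose, hKin, ← hw]
  have hCl : ∀ j : Fin M,
      (g.SM * g.KMM⁻¹ * (g.Pmat x (t+1))ᵀ) j (Fin.last t) = (g.SM *ᵥ w) j := by
    intro j
    have e1 : (g.SM * g.KMM⁻¹ * (g.Pmat x (t+1))ᵀ) j (Fin.last t)
        = ((g.SM * g.KMM⁻¹) *ᵥ a) j := by
      rw [ha]
      simp only [Matrix.mul_apply, Matrix.mulVec, dotProduct, Matrix.transpose_apply]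
      refine Finset.sum_congr rfl fun k _ => ?_
      congr 1 <;> simp [GPSSM.Pmat, GPSSM.KxM, Fin.val_last]
    rw [e1, ← Matrix.mulVec_mulVec, ← hw]
  -- the conditional mean update
  have hμstep : g.muHatM x (t+1) = μ + u₂ • u := by
    funext j
    unfold GPSSM.muHatM
    rw [hu₁]
    simp only [Pi.add_apply, Pi.smul_apply, smul_eq_mul]
    have e : ((g.SM * g.KMM⁻¹ * (g.Pmat x (t+1))ᵀ) *ᵥ u₁) j
        = (Bm *ᵥ (Pii *ᵥ r - u₂ • (Pii *ᵥ c))) j + (g.SM *ᵥ w) j * u₂ := by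
      rw [Matrix.mulVec, dotProduct, Fin.sum_univ_castSucc]
      simp only [hu₁def, Fin.snoc_castSucc, Fin.snoc_last, hCc, hCl]
      rfl
    rw [e, Matrix.mulVec_sub, Matrix.mulVec_smul, hμeq, hu3]
    simp only [Pi.add_apply, Pi.sub_apply, Pi.smul_apply, smul_eq_mul]
    ring
  -- the conditional covariance update
  set W₁ : Matrix (Fin t) (Fin M) ℝ := Pii * Bmᵀ - vecMulVec (v⁻¹ • (Pii *ᵥ c)) u with hW₁def
  have hPW₁ : g.blockS x t * W₁ = Bmᵀ - vecMulVec (v⁻¹ • c) u := by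
    rw [hW₁def, Matrix.mul_sub, ← Matrix.mul_assoc, hPr, Matrix.one_mul, mul_vecMulVec',
      Matrix.mulVec_smul, hPPic]
  have hcW₁ : c ᵥ* W₁ = Bm *ᵥ (Pii *ᵥ c) - (v⁻¹ * (c ⬝ᵥ (Pii *ᵥ c))) • u := by
    rw [hW₁def, Matrix.vecMul_sub, ← Matrix.vecMul_vecMul, ← Matrix.mulVec_transpose Pii c,
      hPiisym, Matrix.vecMul_transpose, vecMul_vecMulVec', dotProduct_smul, smul_eq_mul]
  set W : Matrix (Fin (t+1)) (Fin M) ℝ := Matrix.of (Fin.snoc (fun i => W₁ i) (v⁻¹ • u))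
    with hWdef
  have hWc : ∀ (k : Fin t) (j : Fin M), W k.castSucc j = W₁ k j := by
    intro k j; simp [hWdef, Fin.snoc_castSucc]
  have hWl : ∀ j : Fin M, W (Fin.last t) j = v⁻¹ * u j := by
    intro j; simp [hWdef, Fin.snoc_last]
  have hui : ∀ i', u i' = (g.SM *ᵥ w) i' - (Bm *ᵥ (Pii *ᵥ c)) i' := by
    intro i'; rw [hu3]; rfl
  have hNW : g.blockS x (t+1) * W = g.Pmat x (t+1) * (g.KMM⁻¹ * g.SM) := by
    ext i j
    induction i using Fin.lastCases with
    | last =>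
      have e : (g.blockS x (t+1) * W) (Fin.last t) j
          = (c ᵥ* W₁) j + g.Stl x t t * (v⁻¹ * u j) := by
        rw [Matrix.mul_apply, Fin.sum_univ_castSucc]
        simp only [hNlc, hNll, hWc, hWl]
        rfl
      have e2 : (g.Pmat x (t+1) * (g.KMM⁻¹ * g.SM)) (Fin.last t) j
          = (g.SM *ᵥ w) j := by
        have e3 : (g.Pmat x (t+1) * (g.KMM⁻¹ * g.SM)) (Fin.last t) j
            = (a ᵥ* (g.KMM⁻¹ * g.SM)) j := by
          rw [ha]
          simp only [Matrix.mul_apply, Matrix.vecMul, dotProduct]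
          refine Finset.sum_congr rfl fun k _ => ?_
          congr 1 <;> simp [GPSSM.Pmat, GPSSM.KxM, Fin.val_last]
        rw [e3, ← Matrix.vecMul_vecMul, haKw, ← Matrix.mulVec_transpose, hSMsym]
      rw [e, e2, hcW₁, hst]
      simp only [Pi.sub_apply, Pi.smul_apply, smul_eq_mul]
      have hvv : v * v⁻¹ = 1 := mul_inv_cancel₀ hv'
      linear_combination (u j) * hvv + hui j
    | cast i =>
      have e : (g.blockS x (t+1) * W) i.castSucc j
          = (g.blockS x t * W₁) i j + c i * (v⁻¹ * u j) := by
        rw [Matrix.mul_apply, Fin.sum_univ_castSucc]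
        simp only [hNcc, hNcl, hWc, hWl]
        rfl
      have e2 : (g.Pmat x (t+1) * (g.KMM⁻¹ * g.SM)) i.castSucc j = Bmᵀ i j := by
        rw [hBmT, Matrix.mul_apply, Matrix.mul_apply]
        refine Finset.sum_congr rfl fun k _ => ?_
        congr 1 <;> simp [GPSSM.Pmat]
      rw [e, e2, hPW₁]
      simp only [Matrix.sub_apply, vecMulVec_apply, Pi.smul_apply, smul_eq_mul]
      ring
  have hW : (g.blockS x (t+1))⁻¹ * (g.Pmat x (t+1) * (g.KMM⁻¹ * g.SM)) = W := by
    rw [← hNW, ← Matrix.mul_assoc, hNl, Matrix.one_mul]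
  have hQtW : (g.Pmat x (t+1))ᵀ * W = (g.Pmat x t)ᵀ * W₁ + v⁻¹ • vecMulVec a u := by
    ext j j'
    have e : ((g.Pmat x (t+1))ᵀ * W) j j'
        = (∑ k : Fin t, g.Pmat x t k j * W₁ k j') + a j * (v⁻¹ * u j') := by
      rw [Matrix.mul_apply, Fin.sum_univ_castSucc]
      congr 1
      · refine Finset.sum_congr rfl fun k _ => ?_
        rw [hWc]
        congr 1 <;> simp [GPSSM.Pmat, Matrix.transpose_apply]
      · rw [Matrix.transpose_apply, hWl]
        congr 1
        simp [GPSSM.Pmat, GPSSM.KxM, Fin.val_last, ha]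
    rw [e]
    simp only [Matrix.add_apply, Matrix.mul_apply, Matrix.smul_apply, vecMulVec_apply,
      Matrix.transpose_apply, smul_eq_mul]
    ring
  have hBW₁ : Bm * W₁ = Bm * (Pii * Bmᵀ) - vecMulVec (Bm *ᵥ (v⁻¹ • (Pii *ᵥ c))) u := by
    rw [hW₁def, Matrix.mul_sub, mul_vecMulVec']
  have hSstep : g.SigHatM x (t+1) = Sg - v⁻¹ • vecMulVec u u := by
    unfold GPSSM.SigHatM
    simp only [Matrix.mul_assoc]
    rw [hW, hQtW, Matrix.mul_add, Matrix.mul_add, Matrix.mul_smul, Matrix.mul_smul,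
      mul_vecMulVec', mul_vecMulVec', ← hw]
    rw [← Matrix.mul_assoc g.SM, ← Matrix.mul_assoc _ _ W₁, ← hBm, hBW₁, hSdec]
    ext i j
    simp only [Matrix.sub_apply, Matrix.add_apply, Matrix.smul_apply, vecMulVec_apply,
      Matrix.mulVec_smul, Pi.smul_apply, smul_eq_mul, hui]
    ring
  -- final assembly
  have hLHS : g.trans y (x t) f = gauss y (x t + w ⬝ᵥ f) q := by
    unfold GPSSM.trans
    rw [← ha, ← hqdef, haK]
  have key := gaussian_update Sg hpost₁ w μ f q y (x t) htrans
  rw [← hu, ← hδdef, ← hvdef, ← hu₂] at key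
  rw [hLHS, hμstep, hSstep, hmean, hcveq]
  exact key
end

section
/- Corollary S2 / Theorem 2 (equality of the evidence lower bounds for R = 1). Let observations y_1,…,y_T ∈ ℝ and define L = Σ_{t=1}^T ∫ q(x_t) log N(y_t | C·x_t, Ω) dx_t − ∫ q(x_0) log(q(x_0)/N(x_0|μ_0,Q_0)) dx_0 − ∫ q(f_M) log(q(f_M)/N_M(f_M|0,K_MM)) df_M, where q(x_t) is the GPSSM marginal q(x_t) = ∫ q(x_0) q(f_M) ∏_{t'=0}^{t−1} p(x_{t'+1}|x_{t'},f_M) df_M dx_0⋯dx_{t−1}; define L_Δ analogously with the Δ-quantities (marginals q^Δ(x_j), emission N(y_j | C^Δ x_j, Ω^Δ), priors N(x_0|μ^Δ_0,Q^Δ_0) and N_M(f_M|0,K^Δ_MM)) and J = T/R. If R = 1 and the parameters are set as m^Δ_0 = m_0, S^Δ_0 = S_0, m^Δ_M = m_M, S^Δ_M = S_M, Q^Δ = Q/Δt, K^Δ_MM = K_MM, K^Δ_{xM} = K_{xM}/Δt, K^Δ_{xx} = K_{xx}/Δt² for all x, and additionally μ^Δ_0 = μ_0, Q^Δ_0 =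 Q_0, C^Δ = C, Ω^Δ = Ω, then L = L_Δ. -/
open MeasureTheory Matrix

/-- SDE-discretization data in interdomain form: the kernel quantities
`K^Δ_MM`, `K^Δ_{xM}`, `K^Δ_xx` are given directly as functions, together with `Δt`,
the integer resolution `R`, the diffusion parameter `Q^Δ`, and the variational
parameters `mM, SM` (inducing outputs) and `m0, S0` (initial state). -/
structure SDEF (M : ℕ) where
  KMM : Matrix (Fin M) (Fin M) ℝ
  KxM : ℝ → Fin M → ℝ
  Kxx : ℝ → ℝ
  dt : ℝ
  R : ℕ
  Q : ℝ
  mM : Fin M → ℝ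
  SM : Matrix (Fin M) (Fin M) ℝ
  m0 : ℝ
  S0 : ℝ

namespace SDEF

variable {M : ℕ} (s : SDEF M)

/-- The step size `R·Δt`. -/
noncomputable def rho : ℝ := (s.R : ℝ) * s.dt

/-- Euler–Maruyama transition variance
`RΔt·Q^Δ + (RΔt)²(K^Δ_xx − K^Δ_{xM} (K^Δ_MM)⁻¹ (K^Δ_{xM})ᵀ)`. -/
noncomputable def transVar (x : ℝ) : ℝ :=
  s.rho * s.Q + s.rho ^ 2 * (s.Kxx x - s.KxM x ⬝ᵥ (s.KMM⁻¹ *ᵥ s.KxM x))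

/-- Euler–Maruyama transition density `p^Δ(x' | x, f_M)`. -/
noncomputable def trans (x' x : ℝ) (f : Fin M → ℝ) : ℝ :=
  gauss x' (x + s.rho * (s.KxM x ⬝ᵥ (s.KMM⁻¹ *ᵥ f))) (s.transVar x)

end SDEF

/-- The GPSSM variational marginal `q(x_t)` (inducing outputs and previous states
integrated out). -/
noncomputable def GPSSM.marg {M : ℕ} (g : GPSSM M) (t : ℕ) (xt : ℝ) : ℝ :=
  ∫ f : Fin M → ℝ, ∫ xs : Fin t → ℝ,
    gauss (path t xs xt 0) g.m0 g.S0 * gaussM f g.mM g.SM *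
      ∏ t' ∈ Finset.range t, g.trans (path t xs xt (t' + 1)) (path t xs xt t') f

/-- The SDE variational marginal `q^Δ(x_j)` (inducing outputs and previous states
integrated out). -/
noncomputable def SDEF.marg {M : ℕ} (s : SDEF M) (j : ℕ) (xj : ℝ) : ℝ :=
  ∫ f : Fin M → ℝ, ∫ xs : Fin j → ℝ,
    gauss (path j xs xj 0) s.m0 s.S0 * gaussM f s.mM s.SM *
      ∏ j' ∈ Finset.range j, s.trans (path j xs xj (j' + 1)) (path j xs xj j') f

/-!
For `R = 1` the Euler–Maruyama step is `Δt`, and the interdomain scalings `K^Δ_{xM} = K_{xM}/Δt`,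
`K^Δ_{xx} = K_{xx}/Δt²`, `Q^Δ = Q/Δt` cancel exactly against the powers of the step in the
Euler–Maruyama mean and variance. Hence the SDE transition density is the GPSSM one, so the
variational marginals agree, and every term of the two evidence lower bounds coincides.
-/

namespace SDEF

variable {M : ℕ} (s : SDEF M) (g : GPSSM M)

theorem rho_eq_dt_of_R_eq_one (hR : s.R = 1) : s.rho = s.dt := by
  simp [rho, hR]

theorem transVar_eq_gpssm (hρ : s.rho ≠ 0) (hQ : s.Q = g.Q / s.rho) (hKMM : s.KMM = g.KMM)
    (hKxM : ∀ x, s.KxM x = s.rho⁻¹ • g.KxM x) (hKxx : ∀ x, s.Kxx x = g.k x x / s.rho ^ 2)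
    (x : ℝ) : s.transVar x = g.transVar x := by
  simp only [transVar, GPSSM.transVar, hQ, hKxx, hKxM, hKMM, mulVec_smul, smul_dotProduct,
    dotProduct_smul, smul_eq_mul]
  field_simp
  ring

theorem trans_eq_gpssm (hρ : s.rho ≠ 0) (hQ : s.Q = g.Q / s.rho) (hKMM : s.KMM = g.KMM)
    (hKxM : ∀ x, s.KxM x = s.rho⁻¹ • g.KxM x) (hKxx : ∀ x, s.Kxx x = g.k x x / s.rho ^ 2) :
    s.trans = g.trans := by
  funext x' x f
  simp only [trans, GPSSM.trans, transVar_eq_gpssm s g hρ hQ hKMM hKxM hKxx, hKxM, hKMM,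
    smul_dotProduct, smul_eq_mul, mul_inv_cancel_left₀ hρ]

theorem marg_eq_gpssm_of_trans_eq (htrans : s.trans = g.trans) (hm0 : s.m0 = g.m0)
    (hS0 : s.S0 = g.S0) (hmM : s.mM = g.mM) (hSM : s.SM = g.SM) : s.marg = g.marg := by
  funext j xj
  simp only [marg, GPSSM.marg, htrans, hm0, hS0, hmM, hSM]

end SDEF

theorem sde_gpssm_elbo_equality_general
    {M T : ℕ} (g : GPSSM M) (s : SDEF M)
    (y : ℕ → ℝ)                -- observations y_1, …, y_T
    (C Ω μ0 Q0 : ℝ)            -- GPSSM emission and initial-state prior parameters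
    (CΔ ΩΔ μ0Δ Q0Δ : ℝ)        -- SDE emission and initial-state prior parameters
    (hdt : 0 < s.dt)
    -- parameter settings
    (hR : s.R = 1)
    (hm0 : s.m0 = g.m0) (hS0' : s.S0 = g.S0)
    (hmM : s.mM = g.mM) (hSM' : s.SM = g.SM)
    (hQ' : s.Q = g.Q / s.dt)
    (hKMM' : s.KMM = g.KMM)
    (hKxM : ∀ x : ℝ, s.KxM x = fun a => g.k x (g.z a) / s.dt)
    (hKxx : ∀ x : ℝ, s.Kxx x = g.k x x / s.dt ^ 2)
    (hμ0Δ : μ0Δ = μ0) (hQ0Δ' : Q0Δ = Q0) (hCΔ : CΔ = C) (hΩΔ' : ΩΔ = Ω) :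
    ((∑ t ∈ Finset.Icc 1 T,
        ∫ xt : ℝ, g.marg t xt * Real.log (gauss (y t) (C * xt) Ω))
      - (∫ x0 : ℝ, gauss x0 g.m0 g.S0 * Real.log (gauss x0 g.m0 g.S0 / gauss x0 μ0 Q0))
      - ∫ f : Fin M → ℝ,
          gaussM f g.mM g.SM * Real.log (gaussM f g.mM g.SM / gaussM f 0 g.KMM))
    = ((∑ j ∈ Finset.Icc 1 (T / s.R),
          ∫ xj : ℝ, s.marg j xj * Real.log (gauss (y j) (CΔ * xj) ΩΔ))
        - (∫ x0 : ℝ, gauss x0 s.m0 s.S0 * Real.log (gauss x0 s.m0 s.S0 / gauss x0 μ0Δ Q0Δ))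
        - ∫ f : Fin M → ℝ,
            gaussM f s.mM s.SM * Real.log (gaussM f s.mM s.SM / gaussM f 0 s.KMM)) := by
  have hρ : s.rho = s.dt := s.rho_eq_dt_of_R_eq_one hR
  have hKxM_smul : ∀ x, s.KxM x = s.rho⁻¹ • g.KxM x := fun x => by
    funext a
    simp [hKxM x, hρ, GPSSM.KxM, div_eq_inv_mul]
  have htrans : s.trans = g.trans :=
    s.trans_eq_gpssm g (hρ ▸ hdt.ne') (hρ ▸ hQ') hKMM' hKxM_smul (hρ ▸ hKxx)
  have hmarg : s.marg = g.marg := s.marg_eq_gpssm_of_trans_eq g htrans hm0 hS0' hmM hSM'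
  simp only [hR, Nat.div_one, hmarg, hm0, hS0', hmM, hSM', hKMM', hμ0Δ, hQ0Δ', hCΔ, hΩΔ']

/-- **Corollary S2 / Theorem 2** (equality of the evidence lower bounds for `R = 1`).
With the interdomain parameter settings `m^Δ_0 = m_0`, `S^Δ_0 = S_0`, `m^Δ_M = m_M`,
`S^Δ_M = S_M`, `Q^Δ = Q/Δt`, `K^Δ_MM = K_MM`, `K^Δ_{xM} = K_{xM}/Δt`,
`K^Δ_{xx} = K_{xx}/Δt²`, `μ^Δ_0 = μ_0`, `Q^Δ_0 = Q_0`, `C^Δ = C`, `Ω^Δ = Ω` and `R = 1`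
(so `J = T/R = T`), the two evidence lower bounds coincide: `L = L_Δ`. -/
theorem sde_gpssm_elbo_equality
    {M T : ℕ} (g : GPSSM M) (s : SDEF M)
    (y : ℕ → ℝ)                -- observations y_1, …, y_T
    (C Ω μ0 Q0 : ℝ)            -- GPSSM emission and initial-state prior parameters
    (CΔ ΩΔ μ0Δ Q0Δ : ℝ)        -- SDE emission and initial-state prior parameters
    (hdt : 0 < s.dt) (hQ : 0 < g.Q) (hS0 : 0 < g.S0) (hΩ : 0 < Ω) (hQ0 : 0 < Q0)
    (hΩΔ : 0 < ΩΔ) (hQ0Δ : 0 < Q0Δ)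
    (hKMM : g.KMM.PosDef) (hSM : g.SM.PosDef)
    (htrans : ∀ x : ℝ, 0 < g.transVar x)
    (hstrans : ∀ x : ℝ, 0 < s.transVar x)
    -- parameter settings
    (hR : s.R = 1)
    (hm0 : s.m0 = g.m0) (hS0' : s.S0 = g.S0)
    (hmM : s.mM = g.mM) (hSM' : s.SM = g.SM)
    (hQ' : s.Q = g.Q / s.dt)
    (hKMM' : s.KMM = g.KMM)
    (hKxM : ∀ x : ℝ, s.KxM x = fun a => g.k x (g.z a) / s.dt)
    (hKxx : ∀ x : ℝ, s.Kxx x = g.k x x / s.dt ^ 2)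
    (hμ0Δ : μ0Δ = μ0) (hQ0Δ' : Q0Δ = Q0) (hCΔ : CΔ = C) (hΩΔ' : ΩΔ = Ω) :
    ((∑ t ∈ Finset.Icc 1 T,
        ∫ xt : ℝ, g.marg t xt * Real.log (gauss (y t) (C * xt) Ω))
      - (∫ x0 : ℝ, gauss x0 g.m0 g.S0 * Real.log (gauss x0 g.m0 g.S0 / gauss x0 μ0 Q0))
      - ∫ f : Fin M → ℝ,
          gaussM f g.mM g.SM * Real.log (gaussM f g.mM g.SM / gaussM f 0 g.KMM))
    = ((∑ j ∈ Finset.Icc 1 (T / s.R),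
          ∫ xj : ℝ, s.marg j xj * Real.log (gauss (y j) (CΔ * xj) ΩΔ))
        - (∫ x0 : ℝ, gauss x0 s.m0 s.S0 * Real.log (gauss x0 s.m0 s.S0 / gauss x0 μ0Δ Q0Δ))
        - ∫ f : Fin M → ℝ,
            gaussM f s.mM s.SM * Real.log (gaussM f s.mM s.SM / gaussM f 0 s.KMM)) :=
  sde_gpssm_elbo_equality_general g s y C Ω μ0 Q0 CΔ ΩΔ μ0Δ Q0Δ hdt hR hm0 hS0' hmM hSM' hQ' hKMM'
    hKxM hKxx hμ0Δ hQ0Δ' hCΔ hΩΔ'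
end

section
/- Incremental marginal identities in the inductive step of Lemma S1 (step ii, Eqs. S58–S61). Fix t ≥ 1 and states x_0,…,x_t ∈ ℝ. Let A = (S̃_{a,b})_{0≤a,b≤t−1}, c = (S̃_{t,0},…,S̃_{t,t−1}) ∈ ℝ^{1×t}, d = S̃_{t,t}, r = (x_1 − μ̃_0,…,x_t − μ̃_{t−1})ᵀ ∈ ℝ^t, P ∈ ℝ^{t×M} the matrix with rows K_{x_a M} (a = 0,…,t−1), κ = K_{x_t M}, and let μ̂^t_M = m_M + S_M K_MM^{−1}Pᵀ A^{−1} r and Σ̂^t_M = S_M − S_M K_MM^{−1}Pᵀ A^{−1} P K_MM^{−1} S_M. Then (i) the mean identity x_t + κ K_MM^{−1} μ̂^t_M = μ̃_t + c A^{−1} r holds, and (ii) the variance identity (Q + K_{x_t x_t} − κ K_MM^{−1} κᵀ) + κ K_MM^{−1} Σ̂^t_M K_MM^{−1} κᵀ = S̃_{t,t} − S̃_{t,0:t−1} A^{−1} S̃_{0:t−1,t} holds, i.e., the one-step predictive mean and variance computed from the conditional distribution of f_M given x_0,…,x_t equal the Gaussian-conditioning formulas μ̂_{t+1} and Σ̂_{t+1}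 of Theorem S1. -/
open MeasureTheory Matrix

/-- **Incremental marginal identities in the inductive step of Lemma S1**
(step ii, Eqs. S58–S61): the one-step predictive mean and variance computed from the
conditional distribution of `f_M` given `x_0, …, x_t` equal the Gaussian-conditioning
formulas `μ̂_{t+1}` and `Σ̂_{t+1}` of Theorem S1. -/
theorem gpssm_incremental_marginal_identities
    {M : ℕ} (g : GPSSM M)
    (hQ : 0 < g.Q) (hKMM : g.KMM.PosDef) (hSM : g.SM.PosDef)
    (t : ℕ) (ht : 1 ≤ t) (x : ℕ → ℝ)
    -- A = (S̃_{a,b})_{0≤a,b≤t−1} is positive definite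
    (hA : (g.blockS x t).PosDef) :
    -- (i) mean identity:  x_t + κ K_MM⁻¹ μ̂^t_M = μ̃_t + c A⁻¹ r
    (x t + g.KxM (x t) ⬝ᵥ (g.KMM⁻¹ *ᵥ g.muHatM x t)
        = g.muT (x t) +
            (fun i : Fin t => g.Stl x t i) ⬝ᵥ ((g.blockS x t)⁻¹ *ᵥ g.resid x t))
    ∧
    -- (ii) variance identity:
    -- (Q + K_{x_t x_t} − κ K_MM⁻¹ κᵀ) + κ K_MM⁻¹ Σ̂^t_M K_MM⁻¹ κᵀ
    --   = S̃_{t,t} − S̃_{t,0:t−1} A⁻¹ S̃_{0:t−1,t}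
    ((g.Q + g.k (x t) (x t) - g.KxM (x t) ⬝ᵥ (g.KMM⁻¹ *ᵥ g.KxM (x t)))
        + g.KxM (x t) ⬝ᵥ (g.KMM⁻¹ *ᵥ (g.SigHatM x t *ᵥ (g.KMM⁻¹ *ᵥ g.KxM (x t))))
      = g.Stl x t t -
          (fun i : Fin t => g.Stl x t i) ⬝ᵥ
            ((g.blockS x t)⁻¹ *ᵥ fun i : Fin t => g.Stl x i t)) := by
  have hPapp : ∀ (w : Fin M → ℝ) (i : Fin t), (g.Pmat x t *ᵥ w) i = g.KxM (x i) ⬝ᵥ w := by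
    intro w i; rfl
  have crow : (fun i : Fin t => g.Stl x t i)
      = g.KxM (x t) ᵥ* (g.KMM⁻¹ * g.SM * g.KMM⁻¹ * (g.Pmat x t)ᵀ) := by
    funext i
    have hne : t ≠ (i : ℕ) := Nat.ne_of_gt i.isLt
    have h1 : g.KxM (x t) ᵥ* (g.KMM⁻¹ * g.SM * g.KMM⁻¹ * (g.Pmat x t)ᵀ)
        = g.Pmat x t *ᵥ (g.KxM (x t) ᵥ* (g.KMM⁻¹ * g.SM * g.KMM⁻¹)) := by
      rw [← vecMul_vecMul, vecMul_transpose]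
    rw [h1, hPapp]
    simp only [GPSSM.Stl, if_neg hne, add_zero, mulVec_mulVec, mul_assoc,
      dotProduct_mulVec, dotProduct_comm]
  have ccol : (fun i : Fin t => g.Stl x i t)
      = (g.Pmat x t * (g.KMM⁻¹ * g.SM * g.KMM⁻¹)) *ᵥ g.KxM (x t) := by
    funext i
    have hne : (i : ℕ) ≠ t := Nat.ne_of_lt i.isLt
    rw [← mulVec_mulVec, hPapp]
    simp only [GPSSM.Stl, if_neg hne, add_zero, mulVec_mulVec, mul_assoc, Matrix.mul_assoc]
  have hStt : g.Stl x t t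
      = g.KxM (x t) ⬝ᵥ ((g.KMM⁻¹ * g.SM * g.KMM⁻¹) *ᵥ g.KxM (x t)) + g.transVar (x t) := by
    simp only [GPSSM.Stl, if_pos rfl, if_true, mulVec_mulVec, mul_assoc, Matrix.mul_assoc]
  constructor
  · -- mean identity
    simp only [GPSSM.muHatM, GPSSM.muT, mulVec_add, dotProduct_add, mulVec_mulVec, crow,
      dotProduct_mulVec, vecMul_vecMul, mul_assoc, Matrix.mul_assoc]
    ring
  · -- variance identity
    simp only [GPSSM.SigHatM, hStt, crow, ccol, Matrix.sub_mul, Matrix.mul_sub,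
      sub_mulVec, mulVec_sub, dotProduct_sub, mulVec_mulVec,
      dotProduct_mulVec, vecMul_vecMul, mul_assoc, Matrix.mul_assoc, GPSSM.transVar]
    ring
end
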